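/- Well-typed SE programs write only ciphertexts to registers other than their enc-operands' pre-states: after any step of enc, bop, or cmov in a well-typed program, the destination register holds a ciphertext-marked value; consequently, if in σ every public register other than those holding initial plaintext inputs holds a ciphertext, then after ⟨c, σ⟩ →* ⟨skip, σ'⟩ every register written during execution holds a ciphertext in σ'. -/

import Mathlib

/-- Values: plaintext bitstrings `b` or ciphertext-marked bitstrings `[b]`. -/
inductive Val where
  | plain : List Bool → Val
  | cipher : List Bool → Val

/-- Equivalence of values: all ciphertexts are equivalent; plaintexts iff equal. -/
def Val.equiv : Val → Val → Prop
  | .plain b, .plain b' => b = b'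
  | .cipher _, .cipher _ => True
  | _, _ => False

/-- Security labels. -/
inductive Label where
  | public public | priv
deriving DecidableEq

def Label.le : Label → Label → Prop
  | .priv, .public => False
  | _, _ => True

instance : LE Label := ⟨Label.le⟩

def Label.join : Label → Label → Label
  | .public, .public => .public
  | _, _ => .priv

/-- Commands of the SE language. -/
inductive Cmd (Reg : Type) where
  | skip
  | enc (r : Reg)
  | bop (r₁ r₂ : Reg)
  | cmov (r₁ r₂ r₃ r₄ : Reg)

/-- Programs: a command or a right-associated sequence. -/
inductive Prog (Reg : Type) where
  | single (c : Cmd Reg)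
  | seq (c : Cmd Reg) (p : Prog Reg)

/-- States map registers to values. -/
abbrev St (Reg : Type) := Reg → Val

def updSt {Reg : Type} [DecidableEq Reg] (σ : St Reg) (r : Reg) (v : Val) : St Reg :=
  fun r' => if r' = r then v else σ r'

/-- Small-step semantics.  Fresh encryption randomness is modeled by letting the
resulting ciphertext value be an arbitrary (nondeterministic) ciphertext. -/
inductive Step {Reg : Type} [DecidableEq Reg] (keyReg : Reg) :
    Prog Reg → St Reg → Prog Reg → St Reg → Prop where
  | enc {σ : St Reg} {r b k c} :
      σ r = .plain b → σ keyReg = .plain k →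
      Step keyReg (.single (.enc r)) σ (.single .skip) (updSt σ r (.cipher c))
  | bop {σ : St Reg} {r₁ r₂ c₁ c₂ k c₃} :
      σ r₁ = .cipher c₁ → σ r₂ = .cipher c₂ → σ keyReg = .plain k →
      Step keyReg (.single (.bop r₁ r₂)) σ (.single .skip) (updSt σ r₁ (.cipher c₃))
  | cmov {σ : St Reg} {r₁ r₂ r₃ r₄ c₁ c₃ c₄ k c₅} :
      σ r₁ = .cipher c₁ → σ r₃ = .cipher c₃ → σ r₄ = .cipher c₄ → σ keyReg = .plain k →
      Step keyReg (.single (.cmov r₁ r₂ r₃ r₄)) σ (.single .skip) (updSt σ r₂ (.cipher c₅))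
  | seqSkip {σ : St Reg} {p} :
      Step keyReg (.seq .skip p) σ p σ
  | seqStep {σ σ' : St Reg} {c p} :
      Step keyReg (.single c) σ (.single .skip) σ' →
      Step keyReg (.seq c p) σ (.seq .skip p) σ'

/-- Multi-step relation accumulating per-step time `t`.  Taking `t = fun _ => 1`
counts the number of transitions. -/
inductive Steps {Reg : Type} [DecidableEq Reg] (keyReg : Reg) (t : St Reg → ℕ) :
    Prog Reg → St Reg → ℕ → Prog Reg → St Reg → Prop where
  | refl {p : Prog Reg} {σ} : Steps keyReg t p σ 0 p σ
  | tail {p σ p' σ' n p'' σ''} :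
      Step keyReg p σ p' σ' → Steps keyReg t p' σ' n p'' σ'' →
      Steps keyReg t p σ (t σ + n) p'' σ''

/-- The SE security type system. -/
inductive HasType {Reg : Type} (Γ : Reg → Label) : Prog Reg → Label → Prop where
  | skip : HasType Γ (.single .skip) .public
  | enc {r} : Γ r = .public → HasType Γ (.single (.enc r)) .public
  | bop {r₁ r₂} : Γ r₁ = .public → Γ r₂ = .public →
      HasType Γ (.single (.bop r₁ r₂)) .public
  | cmov {r₁ r₂ r₃ r₄} : Γ r₁ = .public → Γ r₂ = .public → Γ r₃ = .public → Γ r₄ = .public →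
      HasType Γ (.single (.cmov r₁ r₂ r₃ r₄)) .public
  | seq {c p ℓ' ℓ''} : HasType Γ (.single c) ℓ' → HasType Γ p ℓ'' →
      HasType Γ (.seq c p) (Label.join ℓ' ℓ'')

/-- Low-equivalence of states. -/
def lowEquiv {Reg : Type} (Γ : Reg → Label) (l : Label) (σ₁ σ₂ : St Reg) : Prop :=
  ∀ r, Γ r ≤ l → Val.equiv (σ₁ r) (σ₂ r)

/-- The destination register written by a command, if any. -/
def Cmd.dest {Reg : Type} : Cmd Reg → Option Reg
  | .skip => none
  | .enc r => some r
  | .bop r₁ _ => some r₁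
  | .cmov _ r₂ _ _ => some r₂

/-! Every rule of the semantics either leaves the state unchanged or overwrites a single register
with a fresh ciphertext. Hence "every register that changed now holds a ciphertext" is a
reflexive and transitive relation between states that each step satisfies, so it holds along
every execution. -/

def CiphertextUpdate {Reg : Type} (σ σ' : St Reg) : Prop :=
  ∀ r, σ' r ≠ σ r → ∃ b, σ' r = Val.cipher b

namespace CiphertextUpdate

variable {Reg : Type}

theorem refl (σ : St Reg) : CiphertextUpdate σ σ :=
  fun _ hne => absurd rfl hne

theorem trans {σ σ' σ'' : St Reg} (h : CiphertextUpdate σ σ') (h' : CiphertextUpdate σ' σ'') :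
    CiphertextUpdate σ σ'' := by
  intro r hne
  by_cases hr : σ'' r = σ' r
  · rw [hr] at hne ⊢
    exact h r hne
  · exact h' r hr

theorem updSt_cipher [DecidableEq Reg] (σ : St Reg) (r : Reg) (b : List Bool) :
    CiphertextUpdate σ (updSt σ r (.cipher b)) := by
  intro r' hne
  by_cases hr : r' = r
  · exact ⟨b, by simp [updSt, hr]⟩
  · simp [updSt, hr] at hne

end CiphertextUpdate

section Semantics

variable {Reg : Type} [DecidableEq Reg] {keyReg : Reg}

theorem Step.exists_cipher_of_dest {c : Cmd Reg} {p' : Prog Reg} {σ σ' : St Reg} {r : Reg}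
    (h : Step keyReg (.single c) σ p' σ') (hr : c.dest = some r) : ∃ b, σ' r = Val.cipher b := by
  cases h <;> cases hr <;> exact ⟨_, if_pos rfl⟩

theorem Step.ciphertextUpdate {p p' : Prog Reg} {σ σ' : St Reg} (h : Step keyReg p σ p' σ') :
    CiphertextUpdate σ σ' := by
  induction h with
  | enc => exact .updSt_cipher _ _ _
  | bop => exact .updSt_cipher _ _ _
  | cmov => exact .updSt_cipher _ _ _
  | seqSkip => exact .refl _
  | seqStep _ ih => exact ih

theorem Steps.ciphertextUpdate {t : St Reg → ℕ} {p p' : Prog Reg} {σ σ' : St Reg} {k : ℕ}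
    (h : Steps keyReg t p σ k p' σ') : CiphertextUpdate σ σ' := by
  induction h with
  | refl => exact .refl _
  | tail hstep _ ih => exact hstep.ciphertextUpdate.trans ih

end Semantics

theorem writes_only_ciphertexts {Reg : Type} [DecidableEq Reg] (keyReg : Reg)
    (Γ : Reg → Label) :
    (∀ (c : Cmd Reg) (ℓ : Label) (σ σ' : St Reg) (r : Reg),
        HasType Γ (Prog.single c) ℓ →
        Step keyReg (Prog.single c) σ (Prog.single Cmd.skip) σ' →
        c.dest = some r →
        ∃ b, σ' r = Val.cipher b) ∧
    (∀ (c : Prog Reg) (ℓ : Label) (σ σ' : St Reg) (k : ℕ),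
        HasType Γ c ℓ →
        Steps keyReg (fun _ => 1) c σ k (Prog.single Cmd.skip) σ' →
        ∀ r, σ' r ≠ σ r → ∃ b, σ' r = Val.cipher b) :=
  ⟨fun _ _ _ _ _ _ hstep hdest => hstep.exists_cipher_of_dest hdest,
    fun _ _ _ _ _ _ hsteps => hsteps.ciphertextUpdate⟩
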